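/- Let X_h(·,t) : [0,1] → ℝ² be piecewise linear in ξ on a partition 0 = ξ₀ < ξ₁ < ⋯ < ξ_M = 1 and affine in t on [t_{n-1}, t_n], with ∂_ξ X_h ≠ 0 on each subinterval. Let L(t) = Σ_{j=1}^M ∫_{ξ_{j-1}}^{ξ_j} |∂_ξ X_h(ξ,t)| dξ be the length of the polygonal curve. Then L'(t) = -Σ_{j=1}^M [τ_h]_j · v_h(ξ_j), where τ_h = ∂_ξ X_h/|∂_ξ X_h| is the (piecewise constant in ξ) unit tangent, [τ_h]_j = τ_h(ξ_j⁺,t) - τ_h(ξ_j⁻,t) is its jump at node ξ_j (with periodic identification of ξ₀ and ξ_M), and v_h(ξ) = ∂_t X_h(ξ,t) is the (time-independent) velocity. -/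

import Mathlib

open scoped RealInnerProductSpace

/-!
On the `j`-th element the length density is constant, so `L t = ∑ⱼ hⱼ ‖eⱼ t‖` with
`hⱼ = ξⱼ₊₁ - ξⱼ` and slope `eⱼ = hⱼ⁻¹ • (Xⱼ₊₁ - Xⱼ)`, which is affine in `t`. Differentiating the
norm at `eⱼ ≠ 0` gives `hⱼ ⟪τⱼ, eⱼ'⟫ = ⟪τⱼ, vⱼ₊₁ - vⱼ⟫`, and a summation by parts over the closed
polygon (`v` is periodic because the end points `x0`, `x1` are) moves the difference from `v`
onto the tangent, producing the jumps `τⱼ₊₁ - τⱼ`.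
-/

theorem Fin.castSucc_add_one_of_periodic {n : ℕ} [NeZero n] {β : Type*} (w : Fin (n + 1) → β)
    (hw : w (Fin.last n) = w 0) (j : Fin n) : w (j + 1).castSucc = w j.succ := by
  obtain ⟨m, rfl⟩ := Nat.exists_eq_succ_of_ne_zero (NeZero.ne n)
  induction j using Fin.lastCases with
  | last => simp [hw]
  | cast i => rw [Fin.coeSucc_eq_succ, Fin.succ_castSucc]

theorem Fin.sum_comp_castSucc_eq_sum_add_one_comp_succ {n : ℕ} [NeZero n] {α β : Type*}
    [AddCommMonoid α] (w : Fin (n + 1) → β) (hw : w (Fin.last n) = w 0) (F : Fin n → β → α) :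
    ∑ j, F j (w j.castSucc) = ∑ j, F (j + 1) (w j.succ) :=
  (Fintype.sum_equiv (Equiv.addRight 1) _ _ fun j => by
    rw [Equiv.coe_addRight, Fin.castSucc_add_one_of_periodic w hw]).symm

theorem HasDerivAt.norm {F : Type*} [NormedAddCommGroup F] [InnerProductSpace ℝ F]
    {f : ℝ → F} {f' : F} {x : ℝ} (hf : HasDerivAt f f' x) (h : f x ≠ 0) :
    HasDerivAt (fun s => ‖f s‖) ⟪‖f x‖⁻¹ • f x, f'⟫ x := by
  have hsqrt := (Real.hasDerivAt_sqrt (by positivity : ‖f x‖ ^ 2 ≠ 0)).comp x hf.norm_sq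
  simp only [Function.comp_def, Real.sqrt_sq (norm_nonneg _)] at hsqrt
  refine hsqrt.congr_deriv ?_
  rw [real_inner_smul_left]
  field_simp

theorem hasDerivAt_linear_interpolation {E : Type*} [NormedAddCommGroup E] [NormedSpace ℝ E]
    (a b : E) (t₀ t₁ t : ℝ) :
    HasDerivAt (fun s => ((t₁ - s) / (t₁ - t₀)) • a + ((s - t₀) / (t₁ - t₀)) • b)
      ((t₁ - t₀)⁻¹ • (b - a)) t := by
  have hdecr := (((hasDerivAt_id t).const_sub t₁).div_const (t₁ - t₀)).smul_const a
  have hincr := (((hasDerivAt_id t).sub_const t₀).div_const (t₁ - t₀)).smul_const b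
  refine (hdecr.add hincr).congr_deriv ?_
  rw [smul_sub, neg_div, one_div, neg_smul]
  abel

theorem HasDerivAt.mul_norm_inv_smul {E : Type*} [NormedAddCommGroup E] [InnerProductSpace ℝ E]
    {D : ℝ → E} {D' : E} {t : ℝ} (hD : HasDerivAt D D' t) {h : ℝ} (hne : h⁻¹ • D t ≠ 0) :
    HasDerivAt (fun s => h * ‖h⁻¹ • D s‖) ⟪‖h⁻¹ • D t‖⁻¹ • (h⁻¹ • D t), D'⟫ t := by
  have hh : h ≠ 0 := fun h0 => hne (by rw [h0, inv_zero, zero_smul])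
  refine (((hD.fun_const_smul h⁻¹).norm hne).const_mul h).congr_deriv ?_
  rw [real_inner_smul_right, ← mul_assoc, mul_inv_cancel₀ hh, one_mul]

theorem sum_inner_sub_eq_neg_sum_inner_jump {E : Type*} [NormedAddCommGroup E]
    [InnerProductSpace ℝ E] {n : ℕ} [NeZero n] (τ : Fin n → E) (w : Fin (n + 1) → E)
    (hw : w (Fin.last n) = w 0) :
    ∑ j, ⟪τ j, w j.succ - w j.castSucc⟫ = -∑ j, ⟪τ (j + 1) - τ j, w j.succ⟫ := by
  simp only [inner_sub_right, inner_sub_left, Finset.sum_sub_distrib]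
  rw [Fin.sum_comp_castSucc_eq_sum_add_one_comp_succ w hw (fun j x => ⟪τ j, x⟫)]
  ring

theorem polygonal_length_derivative_general
    (M : ℕ) [NeZero M]
    (ξp : Fin (M + 1) → ℝ)
    (x0 x1 : Fin (M + 1) → EuclideanSpace ℝ (Fin 2))
    (hper0 : x0 (Fin.last M) = x0 0) (hper1 : x1 (Fin.last M) = x1 0)
    (tnm1 tn : ℝ)
    -- nodal positions of the interpolated curve at time t
    (X : ℝ → Fin (M + 1) → EuclideanSpace ℝ (Fin 2))
    (hX : ∀ t j, X t j = ((tn - t) / (tn - tnm1)) • x0 j + ((t - tnm1) / (tn - tnm1)) • x1 j)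
    -- slope ∂_ξ X_h on the j-th element, constant in ξ
    (e : ℝ → Fin M → EuclideanSpace ℝ (Fin 2))
    (he : ∀ t j, e t j = (ξp j.succ - ξp j.castSucc)⁻¹ • (X t j.succ - X t j.castSucc))
    (hne : ∀ t ∈ Set.Icc tnm1 tn, ∀ j, e t j ≠ 0)
    -- piecewise-constant unit tangent on each element
    (τh : ℝ → Fin M → EuclideanSpace ℝ (Fin 2))
    (hτ : ∀ t j, τh t j = (‖e t j‖)⁻¹ • e t j)
    -- length of the polygonal curve
    (L : ℝ → ℝ)
    (hL : ∀ t, L t = ∑ j : Fin M, ∫ _ξ in ξp j.castSucc..ξp j.succ, ‖e t j‖)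
    -- (time-independent) velocity at the nodes
    (v : Fin (M + 1) → EuclideanSpace ℝ (Fin 2))
    (hv : ∀ j, v j = (tn - tnm1)⁻¹ • (x1 j - x0 j))
    (t : ℝ) (htmem : t ∈ Set.Ioo tnm1 tn) :
    HasDerivAt L (-(∑ j : Fin M, ⟪τh t (j + 1) - τh t j, v j.succ⟫)) t := by
  have hXv : ∀ j, HasDerivAt (X · j) (v j) t := fun j => by
    rw [show (X · j) = _ from funext (hX · j), hv]
    exact hasDerivAt_linear_interpolation _ _ _ _ _
  have hLe : L = fun s => ∑ j : Fin M, (ξp j.succ - ξp j.castSucc) *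
      ‖(ξp j.succ - ξp j.castSucc)⁻¹ • (X s j.succ - X s j.castSucc)‖ := by
    funext s
    simp only [hL, he, intervalIntegral.integral_const, smul_eq_mul]
  have hLv : HasDerivAt L (∑ j : Fin M, ⟪τh t j, v j.succ - v j.castSucc⟫) t := by
    rw [hLe]
    refine HasDerivAt.fun_sum fun j _ => ?_
    rw [hτ, he]
    exact ((hXv _).sub (hXv _)).mul_norm_inv_smul
      (he t j ▸ hne t (Set.Ioo_subset_Icc_self htmem) j)
  have hvper : v (Fin.last M) = v 0 := by rw [hv, hv, hper0, hper1]
  rwa [sum_inner_sub_eq_neg_sum_inner_jump _ _ hvper] at hLv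

/-- For a curve that is piecewise linear in `ξ` on a partition
`0 = ξ₀ < ⋯ < ξ_M = 1` and affine in `t` on `[t_{n-1}, t_n]`, with nonvanishing slopes,
the length `L(t) = Σ_j ∫_{ξ_{j-1}}^{ξ_j} ‖∂_ξ X_h‖ dξ` of the polygonal curve satisfies
`L'(t) = -Σ_j [τ_h]_j · v_h(ξ_j)`, where `τ_h` is the piecewise-constant unit tangent,
`[τ_h]_j` its jump at node `ξ_j` (periodic identification), and `v_h` the constant velocity. -/
theorem polygonal_length_derivative
    (M : ℕ) [NeZero M]
    (ξp : Fin (M + 1) → ℝ) (hmono : StrictMono ξp)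
    (h0 : ξp 0 = 0) (h1 : ξp (Fin.last M) = 1)
    (x0 x1 : Fin (M + 1) → EuclideanSpace ℝ (Fin 2))
    (hper0 : x0 (Fin.last M) = x0 0) (hper1 : x1 (Fin.last M) = x1 0)
    (tnm1 tn : ℝ) (ht : tnm1 < tn)
    -- nodal positions of the interpolated curve at time t
    (X : ℝ → Fin (M + 1) → EuclideanSpace ℝ (Fin 2))
    (hX : ∀ t j, X t j = ((tn - t) / (tn - tnm1)) • x0 j + ((t - tnm1) / (tn - tnm1)) • x1 j)
    -- slope ∂_ξ X_h on the j-th element, constant in ξ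
    (e : ℝ → Fin M → EuclideanSpace ℝ (Fin 2))
    (he : ∀ t j, e t j = (ξp j.succ - ξp j.castSucc)⁻¹ • (X t j.succ - X t j.castSucc))
    (hne : ∀ t ∈ Set.Icc tnm1 tn, ∀ j, e t j ≠ 0)
    -- piecewise-constant unit tangent on each element
    (τh : ℝ → Fin M → EuclideanSpace ℝ (Fin 2))
    (hτ : ∀ t j, τh t j = (‖e t j‖)⁻¹ • e t j)
    -- length of the polygonal curve
    (L : ℝ → ℝ)
    (hL : ∀ t, L t = ∑ j : Fin M, ∫ _ξ in ξp j.castSucc..ξp j.succ, ‖e t j‖)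
    -- (time-independent) velocity at the nodes
    (v : Fin (M + 1) → EuclideanSpace ℝ (Fin 2))
    (hv : ∀ j, v j = (tn - tnm1)⁻¹ • (x1 j - x0 j))
    (t : ℝ) (htmem : t ∈ Set.Ioo tnm1 tn) :
    HasDerivAt L (-(∑ j : Fin M, ⟪τh t (j + 1) - τh t j, v j.succ⟫)) t :=
  polygonal_length_derivative_general M ξp x0 x1 hper0 hper1 tnm1 tn X hX e he hne τh hτ L hL v hv t
    htmem
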